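/- arXiv:2205.08753 — 7 statements merged into one kernel-verified Lean document; each statement's English description precedes it below -/
import Mathlib

section
/- Let I ⊆ ℝ be a nonempty open interval and let F, G : I → ℂ be analytic (complex-valued real-analytic) functions on I. If |F(x)|² = |G(x)|² for all x ∈ I and F′(x)·conj(F(x)) = G′(x)·conj(G(x)) for all x ∈ I, then there exists λ ∈ ℂ with |λ| = 1 such that G(x) = λ·F(x) for all x ∈ I. -/
/-!
The Wronskian `G' F - F' G` vanishes wherever `F ≠ 0`, because
`(G' F - F' G) · conj F = G' |G|² - G · G' conj G = 0` by the two hypotheses. Hence `G / F` is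
locally constant near a point where `F ≠ 0`, and the identity theorem for real-analytic functions
spreads `G = λ F` to the whole interval; `|λ| = 1` because `|F| = |G|`. If `F` vanishes
identically, so does `G`.
-/

open Set Filter Topology ComplexConjugate

theorem Complex.mul_eq_mul_of_norm_sq_eq_of_mul_conj_eq {f g f' g' : ℂ} (hf : f ≠ 0)
    (hmod : ‖f‖ ^ 2 = ‖g‖ ^ 2) (hder : f' * conj f = g' * conj g) : g' * f = f' * g := by
  have hmc : f * conj f = g * conj g := by
    rw [Complex.mul_conj, Complex.mul_conj, ← Complex.sq_norm, ← Complex.sq_norm, hmod]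
  have hzero : (g' * f - f' * g) * conj f = 0 := by linear_combination g' * hmc - g * hder
  exact sub_eq_zero.mp ((mul_eq_zero.mp hzero).resolve_right (by simpa using hf))

theorem eventuallyEq_const_mul_of_deriv_mul_eq {𝕜 𝕜' : Type*} [RCLike 𝕜]
    [NontriviallyNormedField 𝕜'] [NormedAlgebra 𝕜 𝕜'] {F G : 𝕜 → 𝕜'} {x₀ : 𝕜}
    (hF₀ : F x₀ ≠ 0) (hF : ∀ᶠ x in 𝓝 x₀, DifferentiableAt 𝕜 F x)
    (hG : ∀ᶠ x in 𝓝 x₀, DifferentiableAt 𝕜 G x)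
    (hW : ∀ᶠ x in 𝓝 x₀, F x ≠ 0 → deriv G x * F x = deriv F x * G x) :
    G =ᶠ[𝓝 x₀] fun x => G x₀ / F x₀ * F x := by
  have hFne : ∀ᶠ x in 𝓝 x₀, F x ≠ 0 := hF.self_of_nhds.continuousAt.eventually_ne hF₀
  obtain ⟨ε, hε, hball⟩ := Metric.eventually_nhds_iff_ball.mp (hF.and (hG.and (hFne.and hW)))
  have hdiff : DifferentiableOn 𝕜 (fun x => G x / F x) (Metric.ball x₀ ε) := fun x hx =>
    let ⟨hFx, hGx, hFnex, _⟩ := hball x hx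
    (hGx.div hFx hFnex).differentiableWithinAt
  have hderiv : (Metric.ball x₀ ε).EqOn (deriv fun x => G x / F x) 0 := fun x hx => by
    obtain ⟨hFx, hGx, hFnex, hWx⟩ := hball x hx
    rw [deriv_fun_div hGx hFx hFnex, Pi.zero_apply, hWx hFnex, mul_comm (G x), sub_self, zero_div]
  filter_upwards [Metric.ball_mem_nhds x₀ hε] with x hx
  have hq := Metric.isOpen_ball.is_const_of_deriv_eq_zero (convex_ball x₀ ε).isPreconnected
    hdiff hderiv hx (Metric.mem_ball_self hε)
  rw [← hq, div_mul_cancel₀ _ (hball x hx).2.2.1]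

theorem uniqueness_from_modulus_and_Fprime_conjF_general
    (a b : ℝ) (F G : ℝ → ℂ)
    (hF : AnalyticOnNhd ℝ F (Ioo a b)) (hG : AnalyticOnNhd ℝ G (Ioo a b))
    (hmod : ∀ x ∈ Ioo a b, ‖F x‖ ^ 2 = ‖G x‖ ^ 2)
    (hder : ∀ x ∈ Ioo a b,
      deriv F x * (starRingEnd ℂ) (F x) = deriv G x * (starRingEnd ℂ) (G x)) :
    ∃ l : ℂ, ‖l‖ = 1 ∧ ∀ x ∈ Ioo a b, G x = l * F x := by
  by_cases hF0 : ∀ x ∈ Ioo a b, F x = 0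
  · refine ⟨1, norm_one, fun x hx => ?_⟩
    have hGx : ‖G x‖ ^ 2 = 0 := by rw [← hmod x hx, hF0 x hx, norm_zero, sq, zero_mul]
    simpa [hF0 x hx] using hGx
  obtain ⟨x₀, hx₀, hFx₀⟩ := not_forall₂.mp hF0
  have hI : Ioo a b ∈ 𝓝 x₀ := isOpen_Ioo.mem_nhds hx₀
  have hlocal : G =ᶠ[𝓝 x₀] fun x => G x₀ / F x₀ * F x :=
    eventuallyEq_const_mul_of_deriv_mul_eq hFx₀
      (eventually_of_mem hI fun x hx => (hF x hx).differentiableAt)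
      (eventually_of_mem hI fun x hx => (hG x hx).differentiableAt)
      (eventually_of_mem hI fun x hx hFx =>
        Complex.mul_eq_mul_of_norm_sq_eq_of_mul_conj_eq hFx (hmod x hx) (hder x hx))
  refine ⟨G x₀ / F x₀, ?_, fun x hx => ?_⟩
  · rw [norm_div, div_eq_one_iff_eq (norm_ne_zero_iff.mpr hFx₀),
      (sq_eq_sq₀ (norm_nonneg _) (norm_nonneg _)).mp (hmod x₀ hx₀)]
  · exact hG.eqOn_of_preconnected_of_eventuallyEq (analyticOnNhd_const.mul hF)
      isPreconnected_Ioo hx₀ hlocal hx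

theorem uniqueness_from_modulus_and_Fprime_conjF
    (a b : ℝ) (hab : a < b) (F G : ℝ → ℂ)
    (hF : AnalyticOnNhd ℝ F (Ioo a b)) (hG : AnalyticOnNhd ℝ G (Ioo a b))
    (hmod : ∀ x ∈ Ioo a b, ‖F x‖ ^ 2 = ‖G x‖ ^ 2)
    (hder : ∀ x ∈ Ioo a b,
      deriv F x * (starRingEnd ℂ) (F x) = deriv G x * (starRingEnd ℂ) (G x)) :
    ∃ l : ℂ, ‖l‖ = 1 ∧ ∀ x ∈ Ioo a b, G x = l * F x :=
  uniqueness_from_modulus_and_Fprime_conjF_general a b F G hF hG hmod hder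
end

section
/- Let D ⊆ ℂ be a nonempty open disk whose center lies on the real axis, and let h be holomorphic on D. Suppose that for every real x ∈ D ∩ ℝ one has Re(h(x)) = 0 and the derivative at y = 0 of the real-valued function y ↦ Re(h(x + iy)) vanishes. Then there exists a ∈ ℝ such that h(z) = i·a for all z ∈ D. -/
/-! At a real point the two partial derivatives of `Re h` are `Re h'` and `-Im h'`: the first
vanishes because `Re h = 0` along the real axis, the second by hypothesis. So `h'` vanishes on
the real diameter of the disk, hence on the whole disk by the identity theorem, and `h` is a
constant whose real part is `0`. -/

open Metric Filter Topology

theorem HasDerivAt.hasDerivAt_re_comp_add_ofReal_mul {f : ℂ → ℂ} {f' z : ℂ}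
    (hf : HasDerivAt f f' z) (v : ℂ) :
    HasDerivAt (fun t : ℝ => (f (z + t * v)).re) (f' * v).re 0 := by
  have hline : HasDerivAt (fun w : ℂ => z + w * v) v 0 := by
    simpa using ((hasDerivAt_id (0 : ℂ)).mul_const v).const_add z
  have hcomp : HasDerivAt (fun w : ℂ => f (z + w * v)) (f' * v) 0 :=
    (by simpa using hf : HasDerivAt f f' (z + 0 * v)).comp 0 hline
  simpa using hcomp.real_of_complex

theorem deriv_eq_zero_of_deriv_re_eq_zero {f : ℂ → ℂ} {z : ℂ} (hf : DifferentiableAt ℂ f z)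
    (hx : deriv (fun t : ℝ => (f (z + t)).re) 0 = 0)
    (hy : deriv (fun t : ℝ => (f (z + t * Complex.I)).re) 0 = 0) : deriv f z = 0 := by
  have hre := (hf.hasDerivAt.hasDerivAt_re_comp_add_ofReal_mul 1).deriv
  have him := (hf.hasDerivAt.hasDerivAt_re_comp_add_ofReal_mul Complex.I).deriv
  simp only [mul_one, Complex.mul_I_re] at hre him
  rw [hx] at hre
  rw [hy, zero_eq_neg] at him
  exact Complex.ext hre.symm him

theorem deriv_comp_ofReal_add_eq_zero {g : ℂ → ℝ} {x : ℝ} (hg : ∀ᶠ t : ℝ in 𝓝 x, g t = 0) :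
    deriv (fun t : ℝ => g (x + t)) 0 = 0 := by
  have hg' : (fun t : ℝ => g (x + t)) =ᶠ[𝓝 0] fun _ => 0 := by
    filter_upwards [((continuous_const_add x).tendsto' 0 x (add_zero x)).eventually hg] with t ht
    simpa using ht
  rw [hg'.deriv_eq, deriv_const]

theorem Complex.frequently_nhdsNE_ofReal {p : ℂ → Prop} {x : ℝ}
    (hp : ∃ᶠ t : ℝ in 𝓝[≠] x, p t) : ∃ᶠ z in 𝓝[≠] (x : ℂ), p z :=
  (continuous_ofReal.continuousWithinAt.tendsto_nhdsWithin
    fun _ ht => ofReal_injective.ne ht).frequently hp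

theorem AnalyticOnNhd.eqOn_zero_of_eventually_ofReal_eq_zero {E : Type*} [NormedAddCommGroup E]
    [NormedSpace ℂ E] {f : ℂ → E} {U : Set ℂ} (hf : AnalyticOnNhd ℂ f U) (hU : IsPreconnected U)
    {x : ℝ} (hx : (x : ℂ) ∈ U) (hzero : ∀ᶠ t : ℝ in 𝓝 x, f t = 0) : Set.EqOn f 0 U :=
  hf.eqOn_zero_of_preconnected_of_frequently_eq_zero hU hx
    (Complex.frequently_nhdsNE_ofReal (hzero.filter_mono nhdsWithin_le_nhds).frequently)

theorem holomorphic_const_of_re_and_normal_deriv_vanish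
    (x₀ r : ℝ) (hr : 0 < r) (h : ℂ → ℂ)
    (hhol : DifferentiableOn ℂ h (ball (x₀ : ℂ) r))
    (hre : ∀ x : ℝ, (x : ℂ) ∈ ball (x₀ : ℂ) r → (h x).re = 0)
    (hdy : ∀ x : ℝ, (x : ℂ) ∈ ball (x₀ : ℂ) r →
      deriv (fun y : ℝ => (h (x + y * Complex.I)).re) 0 = 0) :
    ∃ a : ℝ, ∀ z ∈ ball (x₀ : ℂ) r, h z = Complex.I * a := by
  have hU : IsOpen (ball (x₀ : ℂ) r) := isOpen_ball
  have hx₀ : (x₀ : ℂ) ∈ ball (x₀ : ℂ) r := mem_ball_self hr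
  have hnear : ∀ x : ℝ, (x : ℂ) ∈ ball (x₀ : ℂ) r → ∀ᶠ t : ℝ in 𝓝 x, (t : ℂ) ∈ ball (x₀ : ℂ) r :=
    fun x hx => Complex.continuous_ofReal.continuousAt.eventually (hU.mem_nhds hx)
  have hderiv_real : ∀ x : ℝ, (x : ℂ) ∈ ball (x₀ : ℂ) r → deriv h x = 0 := fun x hx =>
    deriv_eq_zero_of_deriv_re_eq_zero (hhol.differentiableAt (hU.mem_nhds hx))
      (deriv_comp_ofReal_add_eq_zero (g := fun z => (h z).re) ((hnear x hx).mono hre)) (hdy x hx)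
  have hderiv : Set.EqOn (deriv h) 0 (ball (x₀ : ℂ) r) :=
    (hhol.analyticOnNhd hU).deriv.eqOn_zero_of_eventually_ofReal_eq_zero
      (convex_ball _ _).isPreconnected hx₀ ((hnear x₀ hx₀).mono hderiv_real)
  refine ⟨(h x₀).im, fun z hz => ?_⟩
  rw [hU.is_const_of_deriv_eq_zero (convex_ball _ _).isPreconnected hhol hderiv hz hx₀]
  exact Complex.ext (by simp [hre x₀ hx₀]) (by simp)
end

section
/- Let U ⊆ ℂ be an open set containing the real line and let F, G be holomorphic on U. Assume that for every x ∈ ℝ, |F(x)| = |G(x)| and |F′(x)| = |G′(x)|. Then there exists c ∈ ℂ with |c| = 1 such that either G(x) = c·F(x) for all x ∈ ℝ, or G(x) = c·conj(F(x)) for all x ∈ ℝ. -/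
/-!
Restrict to the real line: `f = F|ℝ` and `g = G|ℝ` are real-analytic. Differentiating
`f * conj f = g * conj g` and combining it with `f' * conj f' = g' * conj g'` gives
`(g' f - g f') * (g' conj f - g conj f') = 0`. Real-analytic functions on `ℝ` have no zero
divisors, so one of the two Wronskians vanishes identically. A vanishing Wronskian `W(u, v)` makes
`v / u` locally constant near a point where `u ≠ 0`, hence `v = c u` everywhere by the identity
theorem, and `|u| = |v|` forces `|c| = 1`.
-/

open Set Filter ComplexConjugate

theorem AnalyticOnNhd.eq_const_mul_of_wronskian_eq_zero {𝕜 : Type*} [RCLike 𝕜]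
    {𝕜' : Type*} [NontriviallyNormedField 𝕜'] [NormedAlgebra 𝕜 𝕜'] {u v : 𝕜 → 𝕜'}
    (hu : AnalyticOnNhd 𝕜 u univ) (hv : AnalyticOnNhd 𝕜 v univ)
    (hW : ∀ x, deriv v x * u x = v x * deriv u x) {x₀ : 𝕜} (hx₀ : u x₀ ≠ 0) :
    v = fun x => v x₀ / u x₀ * u x := by
  obtain ⟨ε, hε, hball⟩ : ∃ ε > 0, Metric.ball x₀ ε ⊆ {x | u x ≠ 0} :=
    Metric.mem_nhds_iff.1 ((hu x₀ trivial).continuousAt.eventually_ne hx₀)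
  have hdiv : ∀ x ∈ Metric.ball x₀ ε, HasDerivAt (fun t => v t / u t) 0 x := fun x hx => by
    simpa [hW x] using (hv x trivial).differentiableAt.hasDerivAt.fun_div
      (hu x trivial).differentiableAt.hasDerivAt (hball hx)
  have hconst : ∀ x ∈ Metric.ball x₀ ε, v x / u x = v x₀ / u x₀ := fun x hx =>
    Metric.isOpen_ball.is_const_of_deriv_eq_zero (convex_ball x₀ ε).isPreconnected
      (fun y hy => (hdiv y hy).differentiableAt.differentiableWithinAt)
      (fun y hy => (hdiv y hy).deriv) hx (Metric.mem_ball_self hε)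
  refine hv.eq_of_eventuallyEq (analyticOnNhd_const.mul hu) (z₀ := x₀) ?_
  filter_upwards [Metric.ball_mem_nhds x₀ hε] with x hx
  rw [← hconst x hx, div_mul_cancel₀ _ (hball hx)]

theorem exists_norm_eq_one_eq_mul_of_wronskian_eq_zero {u v : ℝ → ℂ}
    (hu : AnalyticOnNhd ℝ u univ) (hv : AnalyticOnNhd ℝ v univ) (hnorm : ∀ x, ‖u x‖ = ‖v x‖)
    (hW : ∀ x, deriv v x * u x = v x * deriv u x) :
    ∃ c : ℂ, ‖c‖ = 1 ∧ ∀ x, v x = c * u x := by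
  by_cases hu0 : ∀ x, u x = 0
  · exact ⟨1, norm_one, fun x => by simpa [hu0 x, eq_comm] using hnorm x⟩
  push Not at hu0
  obtain ⟨x₀, hx₀⟩ := hu0
  refine ⟨v x₀ / u x₀, ?_, congrFun (hu.eq_const_mul_of_wronskian_eq_zero hv hW hx₀)⟩
  rw [norm_div, ← hnorm x₀, div_self (norm_ne_zero_iff.2 hx₀)]

theorem AnalyticOnNhd.conj {f : ℝ → ℂ} {s : Set ℝ} (hf : AnalyticOnNhd ℝ f s) :
    AnalyticOnNhd ℝ (fun t => conj (f t)) s :=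
  (Complex.conjCLE : ℂ →L[ℝ] ℂ).comp_analyticOnNhd hf

theorem mul_conj_eq_of_norm_eq {a b : ℂ} (h : ‖a‖ = ‖b‖) : a * conj a = b * conj b := by
  rw [Complex.mul_conj', Complex.mul_conj', h]

theorem hasDerivAt_mul_conj {f : ℝ → ℂ} {f' : ℂ} {x : ℝ} (hf : HasDerivAt f f' x) :
    HasDerivAt (fun t => f t * conj (f t)) (f' * conj (f x) + f x * conj f') x :=
  hf.mul hf.star

theorem deriv_mul_conj_eq_of_norm_eq {f g : ℝ → ℂ} (hf : Differentiable ℝ f)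
    (hg : Differentiable ℝ g) (hmod : ∀ x, ‖f x‖ = ‖g x‖) (x : ℝ) :
    deriv f x * conj (f x) + f x * conj (deriv f x)
      = deriv g x * conj (g x) + g x * conj (deriv g x) := by
  have hfg : (fun t => f t * conj (f t)) = fun t => g t * conj (g t) :=
    funext fun t => mul_conj_eq_of_norm_eq (hmod t)
  exact (hfg ▸ hasDerivAt_mul_conj (hf x).hasDerivAt).unique
    (hasDerivAt_mul_conj (hg x).hasDerivAt)

theorem wronskian_mul_conj_wronskian_eq_zero {a a' b b' : ℂ} (h : a * conj a = b * conj b)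
    (h' : a' * conj a' = b' * conj b')
    (hd : a' * conj a + a * conj a' = b' * conj b + b * conj b') :
    (b' * a - b * a') * (b' * conj a - b * conj a') = 0 := by
  linear_combination b' ^ 2 * h + b ^ 2 * h' - b * b' * hd

theorem exists_norm_eq_one_eq_mul_or_eq_mul_conj {f g : ℝ → ℂ}
    (hf : AnalyticOnNhd ℝ f univ) (hg : AnalyticOnNhd ℝ g univ)
    (hmod : ∀ x, ‖f x‖ = ‖g x‖) (hmod' : ∀ x, ‖deriv f x‖ = ‖deriv g x‖) :
    ∃ c : ℂ, ‖c‖ = 1 ∧ ((∀ x, g x = c * f x) ∨ ∀ x, g x = c * conj (f x)) := by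
  have hd := deriv_mul_conj_eq_of_norm_eq (fun x => (hf x trivial).differentiableAt)
    (fun x => (hg x trivial).differentiableAt) hmod
  rcases AnalyticOnNhd.eq_zero_or_eq_zero_of_mul_eq_zero
      (hg.deriv.mul hf |>.sub (hg.mul hf.deriv))
      (hg.deriv.mul hf.conj |>.sub (hg.mul hf.deriv.conj))
      (fun x _ => wronskian_mul_conj_wronskian_eq_zero (mul_conj_eq_of_norm_eq (hmod x))
        (mul_conj_eq_of_norm_eq (hmod' x)) (hd x))
      isPreconnected_univ with hW | hW
  · obtain ⟨c, hc, hgc⟩ := exists_norm_eq_one_eq_mul_of_wronskian_eq_zero hf hg hmod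
      fun x => sub_eq_zero.1 (hW x trivial)
    exact ⟨c, hc, Or.inl hgc⟩
  · have hderiv_conj (x : ℝ) : deriv (fun t => conj (f t)) x = conj (deriv f x) := deriv.star
    obtain ⟨c, hc, hgc⟩ := exists_norm_eq_one_eq_mul_of_wronskian_eq_zero hf.conj hg
      (fun x => by rw [Complex.norm_conj, hmod])
      fun x => by simpa only [hderiv_conj] using sub_eq_zero.1 (hW x trivial)
    exact ⟨c, hc, Or.inr hgc⟩

theorem DifferentiableOn.analyticOnNhd_comp_ofReal {F : ℂ → ℂ} {U : Set ℂ} (hU : IsOpen U)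
    (hRU : ∀ x : ℝ, (x : ℂ) ∈ U) (hF : DifferentiableOn ℂ F U) :
    AnalyticOnNhd ℝ (fun t : ℝ => F t) univ := fun x _ =>
  (hF.analyticOnNhd hU x (hRU x)).restrictScalars.comp (Complex.ofRealCLM.analyticAt x)

theorem DifferentiableAt.deriv_comp_ofReal {F : ℂ → ℂ} {x : ℝ} (hF : DifferentiableAt ℂ F x) :
    deriv (fun t : ℝ => F t) x = deriv F x :=
  hF.hasDerivAt.comp_ofReal.deriv

theorem modulus_and_modulus_deriv_determine_up_to_conj
    (U : Set ℂ) (hU : IsOpen U) (hRU : ∀ x : ℝ, (x : ℂ) ∈ U)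
    (F G : ℂ → ℂ) (hF : DifferentiableOn ℂ F U) (hG : DifferentiableOn ℂ G U)
    (hmod : ∀ x : ℝ, ‖F x‖ = ‖G x‖)
    (hmod' : ∀ x : ℝ, ‖deriv F x‖ = ‖deriv G x‖) :
    ∃ c : ℂ, ‖c‖ = 1 ∧
      ((∀ x : ℝ, G x = c * F x) ∨ (∀ x : ℝ, G x = c * (starRingEnd ℂ) (F x))) := by
  have hderiv {H : ℂ → ℂ} (hH : DifferentiableOn ℂ H U) (x : ℝ) :
      deriv (fun t : ℝ => H t) x = deriv H x :=
    (hH.differentiableAt (hU.mem_nhds (hRU x))).deriv_comp_ofReal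
  exact exists_norm_eq_one_eq_mul_or_eq_mul_conj (hF.analyticOnNhd_comp_ofReal hU hRU)
    (hG.analyticOnNhd_comp_ofReal hU hRU) hmod fun x => by
      rw [hderiv hF, hderiv hG, hmod']
end

section
/- Let γ(t) = e^{-πt²}, let a, b be real numbers with a ≠ 0, and let β ≠ 0 be a real number such that β·a ∈ ℤ and β·b ∈ ℤ. Let φ : ℝ → ℂ be a nonzero smooth compactly supported function and define ψ(t) = e^{-2πβt − πβ²}·φ(t + β). Then |𝓕[γφ](ξ)| = |𝓕[γψ](ξ)|, |𝓕[sin(aπ·)γφ](ξ)| = |𝓕[sin(aπ·)γψ](ξ)| and |𝓕[sin(bπ·)γφ](ξ)| = |𝓕[sin(bπ·)γψ](ξ)| for every ξ ∈ ℝ, yet there is no constant c ∈ ℂ with ψ = c·φ. -/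
open MeasureTheory Real

/-- Fourier transform normalized as `𝓕f(ξ) = ∫ f(x) e^{-2πixξ} dx`. -/
noncomputable def FT (f : ℝ → ℂ) (ξ : ℝ) : ℂ :=
  ∫ x : ℝ, f x * Complex.exp (-2 * Real.pi * Complex.I * x * ξ)

lemma FT_shift (f : ℝ → ℂ) (β ξ : ℝ) :
    FT (fun t => f (t + β)) ξ
      = Complex.exp (2 * Real.pi * Complex.I * β * ξ) * FT f ξ := by
  set G : ℝ → ℂ := fun s => Complex.exp (2 * Real.pi * Complex.I * β * ξ) *
      (f s * Complex.exp (-2 * Real.pi * Complex.I * s * ξ)) with hG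
  have h : FT (fun t => f (t + β)) ξ = ∫ t : ℝ, G (t + β) := by
    unfold FT
    congr 1
    funext t
    rw [hG]
    simp only
    have e : Complex.exp (-2 * (Real.pi : ℂ) * Complex.I * ((t : ℂ) + (β : ℂ)) * ξ) *
        Complex.exp (2 * (Real.pi : ℂ) * Complex.I * β * ξ)
        = Complex.exp (-2 * (Real.pi : ℂ) * Complex.I * t * ξ) := by
      rw [← Complex.exp_add]; congr 1; ring
    rw [show ((t + β : ℝ) : ℂ) = (t : ℂ) + (β : ℂ) from by push_cast; ring, ← e]
    ring
  rw [h, MeasureTheory.integral_add_right_eq_self G β, hG,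
    MeasureTheory.integral_const_mul]
  rfl

lemma abs_FT_shift (f : ℝ → ℂ) (c : ℂ) (hc : ‖c‖ = 1) (β ξ : ℝ) :
    ‖FT (fun t => c * f (t + β)) ξ‖ = ‖FT f ξ‖ := by
  have h1 : FT (fun t => c * f (t + β)) ξ = c * FT (fun t => f (t + β)) ξ := by
    unfold FT
    simp_rw [mul_assoc]
    rw [MeasureTheory.integral_const_mul]
  rw [h1, FT_shift, norm_mul, norm_mul, hc, one_mul, Complex.norm_exp]
  have : (2 * (Real.pi : ℂ) * Complex.I * (β : ℂ) * (ξ : ℂ)).re = 0 := by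
    simp [Complex.mul_re, Complex.mul_im]
  rw [this, Real.exp_zero, one_mul]

lemma sin_shift (a β t : ℝ) (k : ℤ) (hk : β * a = k) :
    Real.sin (a * Real.pi * t) = (-1 : ℝ) ^ k * Real.sin (a * Real.pi * (t + β)) := by
  have h : a * Real.pi * (t + β) = a * Real.pi * t + (k : ℝ) * Real.pi := by
    rw [← hk]; ring
  rw [h, Real.sin_add_int_mul_pi, ← mul_assoc, ← mul_zpow]
  norm_num

theorem rational_ratio_counterexample
    (γ : ℝ → ℂ) (hγ : ∀ t : ℝ, γ t = Real.exp (-Real.pi * t ^ 2))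
    (a b β : ℝ) (ha : a ≠ 0) (hβ : β ≠ 0)
    (hβa : ∃ k : ℤ, β * a = k) (hβb : ∃ m : ℤ, β * b = m)
    (φ : ℝ → ℂ) (hφ0 : φ ≠ 0) (hφsmooth : ContDiff ℝ (⊤ : ℕ∞) φ)
    (hφsupp : HasCompactSupport φ)
    (ψ : ℝ → ℂ)
    (hψ : ∀ t : ℝ, ψ t = Real.exp (-2 * Real.pi * β * t - Real.pi * β ^ 2) * φ (t + β)) :
    (∀ ξ : ℝ, ‖FT (fun t => γ t * φ t) ξ‖
        = ‖FT (fun t => γ t * ψ t) ξ‖) ∧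
    (∀ ξ : ℝ, ‖FT (fun t => (Real.sin (a * Real.pi * t) : ℂ) * γ t * φ t) ξ‖
        = ‖FT (fun t => (Real.sin (a * Real.pi * t) : ℂ) * γ t * ψ t) ξ‖) ∧
    (∀ ξ : ℝ, ‖FT (fun t => (Real.sin (b * Real.pi * t) : ℂ) * γ t * φ t) ξ‖
        = ‖FT (fun t => (Real.sin (b * Real.pi * t) : ℂ) * γ t * ψ t) ξ‖) ∧
    ¬ ∃ c : ℂ, ψ = fun t => c * φ t := by
  -- key pointwise identity: γ t * ψ t = γ (t+β) * φ (t+β)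
  have key : ∀ t : ℝ, γ t * ψ t = γ (t + β) * φ (t + β) := by
    intro t
    rw [hγ, hγ, hψ, ← mul_assoc, ← Complex.ofReal_mul, ← Real.exp_add]
    congr 3
    ring
  obtain ⟨k, hk⟩ := hβa
  obtain ⟨m, hm⟩ := hβb
  refine ⟨?_, ?_, ?_, ?_⟩
  · intro ξ
    have h : (fun t => γ t * ψ t) = fun t => (1 : ℂ) * ((fun s => γ s * φ s) (t + β)) := by
      funext t; rw [key t, one_mul]
    rw [h]
    exact (abs_FT_shift (fun s => γ s * φ s) 1 (by simp) β ξ).symm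
  · intro ξ
    have h : (fun t => (Real.sin (a * Real.pi * t) : ℂ) * γ t * ψ t)
        = fun t => ((-1 : ℂ) ^ k) *
            ((fun s => (Real.sin (a * Real.pi * s) : ℂ) * γ s * φ s) (t + β)) := by
      funext t
      simp only
      rw [mul_assoc, key t, sin_shift a β t k hk]
      push_cast
      ring
    rw [h]
    exact (abs_FT_shift (fun s => (Real.sin (a * Real.pi * s) : ℂ) * γ s * φ s)
      ((-1 : ℂ) ^ k) (by rw [norm_zpow]; simp) β ξ).symm
  · intro ξ
    have h : (fun t => (Real.sin (b * Real.pi * t) : ℂ) * γ t * ψ t)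
        = fun t => ((-1 : ℂ) ^ m) *
            ((fun s => (Real.sin (b * Real.pi * s) : ℂ) * γ s * φ s) (t + β)) := by
      funext t
      simp only
      rw [mul_assoc, key t, sin_shift b β t m hm]
      push_cast
      ring
    rw [h]
    exact (abs_FT_shift (fun s => (Real.sin (b * Real.pi * s) : ℂ) * γ s * φ s)
      ((-1 : ℂ) ^ m) (by rw [norm_zpow]; simp) β ξ).symm
  · rintro ⟨c, hc⟩
    have hexp : ∀ x : ℝ, ((Real.exp x : ℝ) : ℂ) ≠ 0 := fun x => by
      exact_mod_cast Real.exp_ne_zero x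
    have hc0 : c ≠ 0 := by
      rintro rfl
      apply hφ0
      funext s
      have h1 := hψ (s - β)
      have h2 : ψ (s - β) = 0 := by rw [hc]; simp
      rw [h2, sub_add_cancel] at h1
      have := (mul_eq_zero.1 h1.symm).resolve_left (hexp _)
      exact this
    have step : ∀ t : ℝ, φ t ≠ 0 → φ (t + β) ≠ 0 := by
      intro t ht hcontra
      have h1 := hψ t
      have h2 : ψ t = c * φ t := by rw [hc]
      rw [h2, hcontra, mul_zero] at h1
      exact mul_ne_zero hc0 ht h1
    obtain ⟨t₀, ht₀⟩ : ∃ t, φ t ≠ 0 := by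
      by_contra h
      push_neg at h
      exact hφ0 (funext fun t => h t)
    have hn : ∀ n : ℕ, φ (t₀ + n * β) ≠ 0 := by
      intro n
      induction n with
      | zero => simpa using ht₀
      | succ n ih =>
        have := step _ ih
        have harg : t₀ + n * β + β = t₀ + (n + 1 : ℕ) * β := by push_cast; ring
        rwa [harg] at this
    obtain ⟨r, hr⟩ := hφsupp.isBounded.subset_closedBall 0
    have habs : ∀ t : ℝ, φ t ≠ 0 → |t| ≤ r := by
      intro t ht
      have : t ∈ tsupport φ := subset_tsupport φ ht
      have := hr this
      simpa [Real.dist_eq] using this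
    obtain ⟨n, hgt⟩ := exists_nat_gt ((r + |t₀|) / |β|)
    have hβpos : (0 : ℝ) < |β| := abs_pos.2 hβ
    have h1 : r + |t₀| < n * |β| := by
      rwa [div_lt_iff₀ hβpos] at hgt
    have h2 : |(n : ℝ) * β| ≤ |t₀ + n * β| + |t₀| := by
      calc |(n : ℝ) * β| = |(t₀ + n * β) + (-t₀)| := by ring_nf
        _ ≤ |t₀ + n * β| + |(-t₀)| := abs_add_le _ _
        _ = |t₀ + n * β| + |t₀| := by rw [abs_neg]
    have h3 : |(n : ℝ) * β| = n * |β| := by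
      rw [abs_mul, Nat.abs_cast]
    have h4 := habs _ (hn n)
    linarith [h3 ▸ h2]
end

section
/- Let d ≥ 1 and let F, G : ℂ^d → ℂ be entire (holomorphic on all of ℂ^d) and not identically zero. Suppose that for every j ∈ {1,…,d} there exists a function φⱼ : ℝ^{d-1} → ℂ taking only values of modulus 1 such that F(x) = φⱼ(x^{(j)})·G(x) for every x ∈ ℝ^d, where x^{(j)} = (x₁,…,x_{j−1},x_{j+1},…,x_d) ∈ ℝ^{d−1} is x with the j-th coordinate removed. Then there exists c ∈ ℂ with |c| = 1 such that F = c·G on ℂ^d. -/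
/-!
On the real points where `G ≠ 0` the quotient `F / G` equals, for each `j`, a function not
depending on the `j`-th coordinate. A coordinate line through such a point meets the real zeros
of `G` in a countable set (isolated zeros of the restriction of `G` to the line), so any two such
points are joined inside `{G ≠ 0}` by changing one coordinate at a time; hence `F / G` is a
constant `c` there, of modulus one. Then `F - c G` vanishes on `ℝ^d`, and an entire function
vanishing on `ℝ^d` vanishes on `ℂ^d`, one variable at a time.
-/

open Function Set

theorem AnalyticOnNhd.countable_preimage_zero {𝕜 E : Type*} [NontriviallyNormedField 𝕜]
    [ConnectedSpace 𝕜] [SecondCountableTopology 𝕜] [NormedAddCommGroup E] [NormedSpace 𝕜 E]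
    {f : 𝕜 → E} (hf : AnalyticOnNhd 𝕜 f univ) {w : 𝕜} (hw : f w ≠ 0) :
    (f ⁻¹' {0}).Countable := by
  have hdisc : IsDiscrete (f ⁻¹' {0} ∩ univ) :=
    isDiscrete_of_codiscreteWithin (hf.preimage_zero_mem_codiscrete hw)
  simpa using (HereditarilyLindelofSpace.isLindelof _).countable_of_isDiscrete hdisc

theorem Differentiable.eq_zero_of_forall_ofReal {E : Type*} [NormedAddCommGroup E]
    [NormedSpace ℂ E] [CompleteSpace E] {f : ℂ → E} (hf : Differentiable ℂ f)
    (h0 : ∀ t : ℝ, f t = 0) : f = 0 := by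
  by_contra! hne
  obtain ⟨w, hw⟩ := ne_iff.mp hne
  have hzeros := (Complex.analyticOnNhd_univ_iff_differentiable.mpr hf).countable_preimage_zero hw
  exact not_countable_univ ((hzeros.preimage Complex.ofReal_injective).mono fun t _ => h0 t)

section PiComplex

variable {ι E : Type*} [Fintype ι] [DecidableEq ι] [NormedAddCommGroup E] [NormedSpace ℂ E]

theorem Differentiable.comp_update {H : (ι → ℂ) → E} (hH : Differentiable ℂ H) (z : ι → ℂ)
    (j : ι) :
    Differentiable ℂ (fun w => H (update z j w)) :=
  hH.comp fun w => (hasFDerivAt_update z w).differentiableAt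

variable [CompleteSpace E]

theorem Differentiable.eq_zero_of_forall_ofReal_pi {H : (ι → ℂ) → E}
    (hH : Differentiable ℂ H) (h0 : ∀ x : ι → ℝ, H (fun i => x i) = 0) : H = 0 := by
  suffices key : ∀ s : Finset ι, ∀ z : ι → ℂ, (∀ i ∉ s, (z i).im = 0) → H z = 0 from
    funext fun z => key Finset.univ z (by simp)
  intro s
  induction s using Finset.induction_on with
  | empty =>
    intro z hz
    have hreal : z = fun i => ((z i).re : ℂ) :=
      funext fun i => Complex.ext rfl (by simp [hz i (Finset.notMem_empty i)])
    exact hreal ▸ h0 _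
  | insert j s _ ih =>
    intro z hz
    have hslice : (fun w => H (update z j w)) = 0 := by
      refine (hH.comp_update z j).eq_zero_of_forall_ofReal fun t => ih _ fun i hi => ?_
      rcases eq_or_ne i j with rfl | hij
      · simp
      · simpa [hij] using hz i (by simp [hij, hi])
    simpa using congrFun hslice (z j)

theorem Differentiable.countable_setOf_update_ofReal_eq_zero {H : (ι → ℂ) → E}
    (hH : Differentiable ℂ H) {x : ι → ℝ} (hx : H (fun i => x i) ≠ 0) (j : ι) :
    {t : ℝ | H (fun i => (update x j t i : ℂ)) = 0}.Countable := by
  have hslice := (Complex.analyticOnNhd_univ_iff_differentiable.mpr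
    (hH.comp_update (fun i => x i) j)).countable_preimage_zero (w := x j) (by simpa using hx)
  refine (hslice.preimage Complex.ofReal_injective).mono fun t ht => ?_
  simpa [apply_update (fun _ (s : ℝ) => (s : ℂ))] using ht

end PiComplex

theorem subsingleton_image_of_forall_update {ι α β : Type*} [Fintype ι] [DecidableEq ι]
    [Uncountable α] {U : Set (ι → α)} {f : (ι → α) → β}
    (hU : ∀ x ∈ U, ∀ j, {t | update x j t ∉ U}.Countable)
    (hf : ∀ x ∈ U, ∀ j t, update x j t ∈ U → f (update x j t) = f x) :
    (f '' U).Subsingleton := by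
  suffices key : ∀ s : Finset ι, ∀ x ∈ U, ∀ y ∈ U, (∀ i ∉ s, x i = y i) → f x = f y by
    rintro _ ⟨x, hx, rfl⟩ _ ⟨y, hy, rfl⟩
    exact key Finset.univ x hx y hy (by simp)
  intro s
  induction s using Finset.induction_on with
  | empty => exact fun x _ y _ hxy => congrArg f (funext fun i => hxy i (Finset.notMem_empty i))
  | insert j s _ ih =>
    intro x hx y hy hxy
    obtain ⟨t, hxt, hyt⟩ : ∃ t, update x j t ∈ U ∧ update y j t ∈ U := by
      by_contra! hall
      refine not_countable_univ (((hU x hx j).union (hU y hy j)).mono fun t _ => ?_)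
      by_cases hxt : update x j t ∈ U
      · exact Or.inr (hall t hxt)
      · exact Or.inl hxt
    have hagree : ∀ i ∉ s, update x j t i = update y j t i := by
      intro i hi
      rcases eq_or_ne i j with rfl | hij
      · simp
      · simpa [hij] using hxy i (by simp [hij, hi])
    calc f x = f (update x j t) := (hf x hx j t hxt).symm
      _ = f (update y j t) := ih _ hxt _ hyt hagree
      _ = f y := hf y hy j t hyt

theorem entire_functions_equal_up_to_unimodular_constant_general
    (n : ℕ) (F G : (Fin (n + 1) → ℂ) → ℂ)
    (hF : Differentiable ℂ F) (hG : Differentiable ℂ G)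
    (h : ∀ j : Fin (n + 1), ∃ φ : (Fin n → ℝ) → ℂ,
      (∀ y : Fin n → ℝ, ‖φ y‖ = 1) ∧
      (∀ x : Fin (n + 1) → ℝ,
        F (fun i => (x i : ℂ)) = φ (j.removeNth x) * G (fun i => (x i : ℂ)))) :
    ∃ c : ℂ, ‖c‖ = 1 ∧ F = fun z => c * G z := by
  choose φ hφ_norm hφ using h
  set U := {x : Fin (n + 1) → ℝ | G (fun i => (x i : ℂ)) ≠ 0}
  set ratio := fun x : Fin (n + 1) → ℝ => F (fun i => (x i : ℂ)) / G (fun i => (x i : ℂ))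
  have ratio_eq (x) (hx : x ∈ U) (j) : ratio x = φ j (j.removeNth x) := by
    simp only [ratio, hφ j x, mul_div_cancel_right₀ _ hx]
  have hU : ∀ x ∈ U, ∀ j, {t | update x j t ∉ U}.Countable := fun x hx j =>
    (hG.countable_setOf_update_ofReal_eq_zero hx j).mono fun _ ht => not_not.mp ht
  have hconst : (ratio '' U).Subsingleton :=
    subsingleton_image_of_forall_update hU fun x hx j t hxt => by
      rw [ratio_eq _ hxt j, ratio_eq x hx j, Fin.removeNth_update]
  obtain ⟨c, hc_norm, hc⟩ : ∃ c : ℂ, ‖c‖ = 1 ∧ ∀ x ∈ U, ratio x = c := by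
    rcases U.eq_empty_or_nonempty with hempty | ⟨x₀, hx₀⟩
    · exact ⟨1, norm_one, by simp [hempty]⟩
    · exact ⟨ratio x₀, ratio_eq x₀ hx₀ 0 ▸ hφ_norm 0 _,
        fun x hx => hconst (mem_image_of_mem _ hx) (mem_image_of_mem _ hx₀)⟩
  have hreal : ∀ x : Fin (n + 1) → ℝ, F (fun i => x i) - c * G (fun i => x i) = 0 := by
    intro x
    by_cases hx : x ∈ U
    · rw [← hc x hx, div_mul_cancel₀ _ hx, sub_self]
    · simp [hφ 0 x, not_not.mp hx]
  refine ⟨c, hc_norm, funext fun z => sub_eq_zero.mp ?_⟩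
  exact congrFun ((hF.sub (hG.const_mul c)).eq_zero_of_forall_ofReal_pi hreal) z

theorem entire_functions_equal_up_to_unimodular_constant
    (n : ℕ) (F G : (Fin (n + 1) → ℂ) → ℂ)
    (hF : Differentiable ℂ F) (hG : Differentiable ℂ G)
    (hF0 : F ≠ 0) (hG0 : G ≠ 0)
    (h : ∀ j : Fin (n + 1), ∃ φ : (Fin n → ℝ) → ℂ,
      (∀ y : Fin n → ℝ, ‖φ y‖ = 1) ∧
      (∀ x : Fin (n + 1) → ℝ,
        F (fun i => (x i : ℂ)) = φ (j.removeNth x) * G (fun i => (x i : ℂ)))) :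
    ∃ c : ℂ, ‖c‖ = 1 ∧ F = fun z => c * G z :=
  entire_functions_equal_up_to_unimodular_constant_general n F G hF hG h
end

section
/- Define ψ₊(x) = e^{-(1+i)πx²} and ψ₋(x) = e^{-(1−i)πx²}. Then 𝓕ψ₊(ξ) = 2^{-1/4} e^{-iπ/8} e^{-(1−i)πξ²/2} and 𝓕ψ₋(ξ) = 2^{-1/4} e^{iπ/8} e^{-(1+i)πξ²/2}; consequently |ψ₊(x)| = |ψ₋(x)| and |𝓕ψ₊(ξ)| = |𝓕ψ₋(ξ)| for all x, ξ ∈ ℝ, yet there is no c ∈ ℂ with |c| = 1 and ψ₊ = c·ψ₋. Hence the pair (|ψ|, |𝓕ψ|) of Pauli data does not determine ψ up to a constant phase factor. -/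
/-!
`ψ₊` and `ψ₋` are Gaussians `x ↦ exp (-π b x²)` with `Re b = 1 > 0`, whose Fourier transform is
`b^{-1/2} exp (-π ξ² / b)`; for `b = 1 ± i = √2 e^{± iπ/4}` the principal square root is
`2^{1/4} e^{± iπ/8}`. The moduli of `ψ₊, ψ₋` (and of their transforms) agree because the two
exponents differ only in the sign of their imaginary parts, while `ψ₊ / ψ₋ = exp (-2πi x²)` is
`1` at `x = 0` and `-1` at `x² = 1/2`, so it is not constant.
-/

open MeasureTheory Real

open Complex FourierTransform

lemma ofReal_mul_exp_mul_I_cpow {r θ : ℝ} (hr : 0 < r) (hθ : θ ∈ Set.Ioc (-π) π) (s : ℝ) :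
    ((r : ℂ) * cexp (θ * I)) ^ (s : ℂ) = ((r ^ s : ℝ) : ℂ) * cexp (θ * s * I) := by
  have hr' : (r : ℂ) ≠ 0 := ofReal_ne_zero.2 hr.ne'
  rw [cpow_def_of_ne_zero (mul_ne_zero hr' (exp_ne_zero _)), log_ofReal_mul hr (exp_ne_zero _),
    log_exp (by simpa using hθ.1) (by simpa using hθ.2), ofReal_cpow hr.le,
    cpow_def_of_ne_zero hr', ← Complex.exp_add, ofReal_log hr.le]
  ring_nf

lemma one_div_sqrt_two_mul_exp_mul_I_cpow_half {θ : ℝ} (hθ : θ ∈ Set.Ioc (-π) π) :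
    1 / (((√2 : ℝ) : ℂ) * cexp (θ * I)) ^ (1 / 2 : ℂ)
      = ((2 : ℝ) ^ (-(1 / 4) : ℝ) : ℝ) * cexp (-(θ / 2) * I) := by
  have h := ofReal_mul_exp_mul_I_cpow (Real.sqrt_pos.2 two_pos) hθ (1 / 2)
  push_cast at h
  rw [h, Real.sqrt_eq_rpow, ← Real.rpow_mul zero_le_two, Real.rpow_neg zero_le_two, ofReal_inv,
    neg_mul, Complex.exp_neg, one_div, mul_inv]
  norm_num
  ring_nf

lemma one_add_I_eq_sqrt_two_mul_exp : (1 + I : ℂ) = ((√2 : ℝ) : ℂ) * cexp (↑(π / 4) * I) := by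
  rw [exp_mul_I, ← ofReal_cos, ← ofReal_sin, cos_pi_div_four, sin_pi_div_four]
  apply Complex.ext <;> simp [← mul_div_assoc]

lemma one_sub_I_eq_sqrt_two_mul_exp : (1 - I : ℂ) = ((√2 : ℝ) : ℂ) * cexp (↑(-(π / 4)) * I) := by
  rw [exp_mul_I, ← ofReal_cos, ← ofReal_sin, Real.cos_neg, Real.sin_neg, cos_pi_div_four,
    sin_pi_div_four]
  apply Complex.ext <;> simp [← mul_div_assoc]

lemma one_div_one_add_I_cpow_half :
    1 / (1 + I) ^ (1 / 2 : ℂ) = ((2 : ℝ) ^ (-(1 / 4) : ℝ) : ℝ) * cexp (-I * π / 8) := by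
  rw [one_add_I_eq_sqrt_two_mul_exp,
    one_div_sqrt_two_mul_exp_mul_I_cpow_half ⟨by linarith [pi_pos], by linarith [pi_pos]⟩]
  push_cast
  ring_nf

lemma one_div_one_sub_I_cpow_half :
    1 / (1 - I) ^ (1 / 2 : ℂ) = ((2 : ℝ) ^ (-(1 / 4) : ℝ) : ℝ) * cexp (I * π / 8) := by
  rw [one_sub_I_eq_sqrt_two_mul_exp,
    one_div_sqrt_two_mul_exp_mul_I_cpow_half ⟨by linarith [pi_pos], by linarith [pi_pos]⟩]
  push_cast
  ring_nf

lemma FT_eq_fourier (f : ℝ → ℂ) : FT f = 𝓕 f := by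
  ext ξ
  rw [FT, Real.fourier_real_eq_integral_exp_smul]
  congr 1 with x
  rw [smul_eq_mul, mul_comm]
  push_cast
  ring_nf

lemma FT_cexp_neg_pi_mul_sq {b : ℂ} (hb : 0 < b.re) (ξ : ℝ) :
    FT (fun x : ℝ => cexp (-b * π * x ^ 2)) ξ = 1 / b ^ (1 / 2 : ℂ) * cexp (-π / b * ξ ^ 2) := by
  rw [FT_eq_fourier, ← congrFun (fourier_gaussian_pi hb) ξ]
  simp_rw [neg_mul, mul_comm b]

lemma FT_cexp_neg_one_add_I (ξ : ℝ) :
    FT (fun x : ℝ => cexp (-(1 + I) * π * x ^ 2)) ξ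
      = ((2 : ℝ) ^ (-(1 / 4) : ℝ) : ℝ) * cexp (-I * π / 8) * cexp (-(1 - I) * π * ξ ^ 2 / 2) := by
  have hb : 0 < (1 + I).re := by simp
  have hexp : -π / (1 + I) * (ξ : ℂ) ^ 2 = -(1 - I) * π * ξ ^ 2 / 2 := by
    have h : (1 + I : ℂ) ≠ 0 := fun h => by simpa using congrArg re h
    field_simp
    ring_nf
    rw [I_sq]
    ring
  rw [FT_cexp_neg_pi_mul_sq hb, one_div_one_add_I_cpow_half, hexp]

lemma FT_cexp_neg_one_sub_I (ξ : ℝ) :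
    FT (fun x : ℝ => cexp (-(1 - I) * π * x ^ 2)) ξ
      = ((2 : ℝ) ^ (-(1 / 4) : ℝ) : ℝ) * cexp (I * π / 8) * cexp (-(1 + I) * π * ξ ^ 2 / 2) := by
  have hb : 0 < (1 - I).re := by simp
  have hexp : -π / (1 - I) * (ξ : ℂ) ^ 2 = -(1 + I) * π * ξ ^ 2 / 2 := by
    have h : (1 - I : ℂ) ≠ 0 := fun h => by simpa using congrArg re h
    field_simp
    ring_nf
    rw [I_sq]
    ring
  rw [FT_cexp_neg_pi_mul_sq hb, one_div_one_sub_I_cpow_half, hexp]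

lemma cexp_neg_one_add_I_mul_sq_eq_mul (x : ℝ) :
    cexp (-(1 + I) * π * x ^ 2) = cexp (-2 * π * I * x ^ 2) * cexp (-(1 - I) * π * x ^ 2) := by
  rw [← Complex.exp_add]
  ring_nf

lemma not_exists_cexp_neg_one_add_I_eq_const_mul :
    ¬ ∃ c : ℂ, (fun x : ℝ => cexp (-(1 + I) * π * x ^ 2))
      = fun x : ℝ => c * cexp (-(1 - I) * π * x ^ 2) := by
  rintro ⟨c, hc⟩
  have hc1 : c = 1 := by simpa using (congrFun hc 0).symm
  have hx : ((√(1 / 2) : ℝ) : ℂ) ^ 2 = 1 / 2 := by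
    rw [← ofReal_pow, Real.sq_sqrt (by norm_num)]
    norm_num
  have h := congrFun hc √(1 / 2)
  rw [cexp_neg_one_add_I_mul_sq_eq_mul, hc1, hx] at h
  have h' := mul_right_cancel₀ (Complex.exp_ne_zero _) h
  rw [show -2 * (π : ℂ) * I * (1 / 2) = -(π * I) by ring, Complex.exp_neg, exp_pi_mul_I] at h'
  norm_num at h'

theorem bargmann_pauli_counterexample
    (ψp ψm : ℝ → ℂ)
    (hp : ∀ x : ℝ, ψp x = Complex.exp (-(1 + Complex.I) * Real.pi * x ^ 2))
    (hm : ∀ x : ℝ, ψm x = Complex.exp (-(1 - Complex.I) * Real.pi * x ^ 2)) :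
    (∀ ξ : ℝ, FT ψp ξ
        = (Complex.ofReal ((2 : ℝ) ^ (-(1 / 4) : ℝ))) * Complex.exp (-Complex.I * Real.pi / 8) *
          Complex.exp (-(1 - Complex.I) * Real.pi * ξ ^ 2 / 2)) ∧
    (∀ ξ : ℝ, FT ψm ξ
        = (Complex.ofReal ((2 : ℝ) ^ (-(1 / 4) : ℝ))) * Complex.exp (Complex.I * Real.pi / 8) *
          Complex.exp (-(1 + Complex.I) * Real.pi * ξ ^ 2 / 2)) ∧
    (∀ x : ℝ, ‖ψp x‖ = ‖ψm x‖) ∧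
    (∀ ξ : ℝ, ‖FT ψp ξ‖ = ‖FT ψm ξ‖) ∧
    ¬ ∃ c : ℂ, ‖c‖ = 1 ∧ ψp = fun x => c * ψm x := by
  obtain rfl : ψp = fun x : ℝ => cexp (-(1 + I) * π * x ^ 2) := funext hp
  obtain rfl : ψm = fun x : ℝ => cexp (-(1 - I) * π * x ^ 2) := funext hm
  refine ⟨FT_cexp_neg_one_add_I, FT_cexp_neg_one_sub_I, fun x => ?_, fun ξ => ?_,
    fun ⟨c, _, hc⟩ => not_exists_cexp_neg_one_add_I_eq_const_mul ⟨c, hc⟩⟩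
  · simp [norm_exp, ← ofReal_pow]
  · rw [FT_cexp_neg_one_add_I, FT_cexp_neg_one_sub_I]
    simp [norm_exp, ← ofReal_pow]
end

section
/- Let (e_k)_{k∈ℕ} be an orthonormal (Hilbert) basis of L²(ℝ). If φ, ψ ∈ L²(ℝ) satisfy |⟨e_k, φ⟩| = |⟨e_k, ψ⟩| for every k ∈ ℕ, |⟨e_k + e_ℓ, φ⟩| = |⟨e_k + e_ℓ, ψ⟩| for all k ≠ ℓ, and |⟨e_k + i·e_ℓ, φ⟩| = |⟨e_k + i·e_ℓ, ψ⟩| for all k ≠ ℓ, then there exists c ∈ ℂ with |c| = 1 such that ψ = c·φ. In other words, the family of rank-one orthogonal projections onto the lines spanned by e_k, e_k + e_ℓ and e_k + i·e_ℓ does phase retrieval on L²(ℝ). -/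
/-!
Write `a k = ⟪e k, φ⟫` and `b k = ⟪e k, ψ⟫`. By polarization, the norms of `a k`, `a l`,
`a k + a l` and `a k - i a l` determine `conj (a k) * a l`, so the hypotheses say that
`conj (a k) * a l = conj (b k) * b l` for all `k, l`. Fixing `k₀` with `a k₀ ≠ 0`, this gives
`b = c • a` with `c = conj (a k₀) / conj (b k₀)` of modulus one, and `ψ = c • φ` since a vector
is determined by its coefficients in a Hilbert basis.
-/

open MeasureTheory ComplexConjugate

theorem re_inner_eq_of_norm_eq {𝕜 F : Type*} [RCLike 𝕜] [SeminormedAddCommGroup F]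
    [InnerProductSpace 𝕜 F] {x x' y y' : F} (h : ‖x‖ = ‖y‖) (h' : ‖x'‖ = ‖y'‖)
    (hadd : ‖x + x'‖ = ‖y + y'‖) :
    RCLike.re (inner 𝕜 x x') = RCLike.re (inner 𝕜 y y') := by
  rw [re_inner_eq_norm_add_mul_self_sub_norm_mul_self_sub_norm_mul_self_div_two,
    re_inner_eq_norm_add_mul_self_sub_norm_mul_self_sub_norm_mul_self_div_two, h, h', hadd]

theorem inner_eq_of_norm_eq {F : Type*} [SeminormedAddCommGroup F] [InnerProductSpace ℂ F]
    {x x' y y' : F} (h : ‖x‖ = ‖y‖) (h' : ‖x'‖ = ‖y'‖) (hadd : ‖x + x'‖ = ‖y + y'‖)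
    (hsubI : ‖x - Complex.I • x'‖ = ‖y - Complex.I • y'‖) :
    inner ℂ x x' = inner ℂ y y' := by
  have im_eq_re : ∀ u u' : F, (inner ℂ u u').im = (inner ℂ u (-Complex.I • u')).re := by
    intro u u'
    simp [inner_smul_right]
  apply Complex.ext (re_inner_eq_of_norm_eq (𝕜 := ℂ) h h' hadd)
  rw [im_eq_re, im_eq_re]
  refine re_inner_eq_of_norm_eq (𝕜 := ℂ) h ?_ ?_
  · simpa only [norm_smul, norm_neg, Complex.norm_I, one_mul] using h'
  · simpa only [neg_smul, ← sub_eq_add_neg] using hsubI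

theorem exists_norm_eq_one_smul_eq_of_conj_mul_eq {ι : Type*} {a b : ι → ℂ}
    (h : ∀ k l, conj (a k) * a l = conj (b k) * b l) :
    ∃ c : ℂ, ‖c‖ = 1 ∧ b = c • a := by
  have norm_eq : ∀ k, ‖a k‖ = ‖b k‖ := fun k => by
    have := h k k
    rw [Complex.conj_mul', Complex.conj_mul'] at this
    exact (pow_left_inj₀ (norm_nonneg _) (norm_nonneg _) two_ne_zero).mp (mod_cast this)
  by_cases ha : a = 0
  · refine ⟨1, norm_one, funext fun k => ?_⟩
    simpa [ha] using (norm_eq k).symm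
  obtain ⟨k₀, hk₀⟩ := Function.ne_iff.mp ha
  have hb₀ : conj (b k₀) ≠ 0 := by
    rw [map_ne_zero, ← norm_ne_zero_iff, ← norm_eq]
    exact norm_ne_zero_iff.mpr hk₀
  refine ⟨conj (a k₀) / conj (b k₀), ?_, funext fun l => ?_⟩
  · rw [norm_div, Complex.norm_conj, Complex.norm_conj, norm_eq, div_self]
    simpa using hb₀
  · rw [Pi.smul_apply, smul_eq_mul, div_mul_eq_mul_div, h, mul_div_cancel_left₀ _ hb₀]

theorem rank_one_projections_do_phase_retrieval
    (e : HilbertBasis ℕ ℂ (Lp ℂ 2 (volume : Measure ℝ)))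
    (φ ψ : Lp ℂ 2 (volume : Measure ℝ))
    (h1 : ∀ k : ℕ, ‖(inner ℂ (e k) φ : ℂ)‖ = ‖(inner ℂ (e k) ψ : ℂ)‖)
    (h2 : ∀ k l : ℕ, k ≠ l →
      ‖(inner ℂ (e k + e l) φ : ℂ)‖ = ‖(inner ℂ (e k + e l) ψ : ℂ)‖)
    (h3 : ∀ k l : ℕ, k ≠ l →
      ‖(inner ℂ (e k + Complex.I • e l) φ : ℂ)‖ = ‖(inner ℂ (e k + Complex.I • e l) ψ : ℂ)‖) :
    ∃ c : ℂ, ‖c‖ = 1 ∧ ψ = c • φ := by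
  have gram_eq : ∀ k l, conj (e.repr φ k) * e.repr φ l = conj (e.repr ψ k) * e.repr ψ l := by
    intro k l
    simp only [HilbertBasis.repr_apply_apply]
    rcases eq_or_ne k l with rfl | hkl
    · rw [Complex.conj_mul', Complex.conj_mul', h1]
    · simp only [← RCLike.inner_apply']
      refine inner_eq_of_norm_eq (h1 k) (h1 l) ?_ ?_
      · simpa only [inner_add_left] using h2 k l hkl
      · simpa only [inner_add_left, inner_smul_left, Complex.conj_I, neg_mul, smul_eq_mul,
          ← sub_eq_add_neg] using h3 k l hkl
  obtain ⟨c, hc, hcoeff⟩ := exists_norm_eq_one_smul_eq_of_conj_mul_eq gram_eq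
  refine ⟨c, hc, e.repr.injective (lp.ext ?_)⟩
  rw [LinearIsometryEquiv.map_smul, lp.coeFn_smul]
  exact hcoeff
end
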